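/- Let G be a graph without isolated vertices and v ∈ V(G) be such that G − v also has no isolated vertices. Then γ_{gr}^{×2}(G − v) ≤ γ_{gr}^{×2}(G) ≤ γ_{gr}^{×2}(G − v) + 3. -/

import Mathlib

open SimpleGraph

variable {V : Type*}

/-- The closed neighborhood of a vertex. -/
def cnbr (G : SimpleGraph V) (v : V) : Set V := insert v (G.neighborSet v)

/-- The number of vertices in the list `l` that dominate `u` (i.e. whose closed
neighborhood contains `u`). -/
noncomputable def domCount (G : SimpleGraph V) (u : V) (l : List V) : ℕ :=
  {w | w ∈ l ∧ u ∈ cnbr G w}.ncard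

/-- A double neighborhood sequence (DNS): a sequence of distinct vertices in which each
vertex dominates some vertex dominated at most once by its predecessors. -/
def IsDNS (G : SimpleGraph V) (l : List V) : Prop :=
  l.Nodup ∧ ∀ i : Fin l.length, ∃ u ∈ cnbr G (l.get i), domCount G u (l.take i) ≤ 1

/-- A double dominating sequence (DDS): a DNS whose underlying set is doubly dominating. -/
def IsDDS (G : SimpleGraph V) (l : List V) : Prop :=
  IsDNS G l ∧ ∀ v, 2 ≤ domCount G v l

/-- The Grundy double domination number: maximum length of a DDS. -/
noncomputable def gddn (G : SimpleGraph V) : ℕ :=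
  sSup {n | ∃ l : List V, IsDDS G l ∧ l.length = n}

/-- The maximum double neighborhood number: maximum length of a DNS. -/
noncomputable def mdnn (G : SimpleGraph V) : ℕ :=
  sSup {n | ∃ l : List V, IsDNS G l ∧ l.length = n}

/-- A legal (Grundy domination) sequence. -/
def IsLegal (G : SimpleGraph V) (l : List V) : Prop :=
  l.Nodup ∧ ∀ i : Fin l.length, ∃ u ∈ cnbr G (l.get i), domCount G u (l.take i) = 0

/-- A dominating sequence: legal sequence whose underlying set dominates. -/
def IsDomSeq (G : SimpleGraph V) (l : List V) : Prop :=
  IsLegal G l ∧ ∀ v, 1 ≤ domCount G v l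

/-- The Grundy domination number: maximum length of a dominating sequence. -/
noncomputable def grundy (G : SimpleGraph V) : ℕ :=
  sSup {n | ∃ l : List V, IsDomSeq G l ∧ l.length = n}

/-- The double domination number: minimum size of a double dominating set. -/
noncomputable def ddomNum (G : SimpleGraph V) : ℕ :=
  sInf {n | ∃ D : Set V, (∀ v, 2 ≤ {w | w ∈ D ∧ v ∈ cnbr G w}.ncard) ∧ D.ncard = n}

/-!
A double neighbourhood sequence of `G - v` is one of `G` too, and in a graph without isolated
vertices every double neighbourhood sequence extends greedily to a double dominating one: while
some `u` is dominated fewer than twice, an unused vertex of `N[u]` (which has at least two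
elements) may be appended. Conversely, deleting from a double dominating sequence of `G` the
vertex `v` and the at most two vertices that are there only to dominate `v` leaves a double
neighbourhood sequence of `G - v`, which again extends to a double dominating one.
-/

section

variable {G : SimpleGraph V}

lemma mem_cnbr_comm {u w : V} : u ∈ cnbr G w ↔ w ∈ cnbr G u := by
  simp [cnbr, mem_neighborSet, adj_comm, eq_comm]

lemma two_le_ncard_cnbr [Finite V] {u w : V} (h : G.Adj u w) : 2 ≤ (cnbr G u).ncard := by
  rw [← Set.ncard_pair h.ne]
  exact Set.ncard_le_ncard (Set.insert_subset_insert (Set.singleton_subset_iff.2 h))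

lemma domCount_mono {u : V} {l₁ l₂ : List V} (h : l₁ ⊆ l₂) :
    domCount G u l₁ ≤ domCount G u l₂ :=
  Set.ncard_le_ncard (fun _ hx => ⟨h hx.1, hx.2⟩) (l₂.finite_toSet.subset fun _ hx => hx.1)

lemma domCount_append_singleton_of_mem {u w : V} {l : List V} (h : u ∈ cnbr G w) (hw : w ∉ l) :
    domCount G u (l ++ [w]) = domCount G u l + 1 := by
  have : {x | x ∈ l ++ [w] ∧ u ∈ cnbr G x} = insert w {x | x ∈ l ∧ u ∈ cnbr G x} := by
    ext x
    simp only [List.mem_append, List.mem_singleton, Set.mem_ofPred_eq, Set.mem_insert_iff]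
    constructor
    · rintro ⟨hx | rfl, hc⟩
      exacts [Or.inr ⟨hx, hc⟩, Or.inl rfl]
    · rintro (rfl | ⟨hx, hc⟩)
      exacts [⟨Or.inr rfl, h⟩, ⟨Or.inl hx, hc⟩]
  rw [domCount, this, Set.ncard_insert_of_notMem (fun hm => hw hm.1)
    (l.finite_toSet.subset fun _ hx => hx.1)]
  rfl

lemma isDNS_nil : IsDNS G [] :=
  ⟨List.nodup_nil, fun i => i.elim0⟩

lemma isDNS_append_singleton {l : List V} {w : V} :
    IsDNS G (l ++ [w]) ↔ IsDNS G l ∧ w ∉ l ∧ ∃ u ∈ cnbr G w, domCount G u l ≤ 1 := by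
  have hold (i : ℕ) (hi : i < l.length) :
      (∃ u ∈ cnbr G ((l ++ [w])[i]'(by simp; omega)), domCount G u ((l ++ [w]).take i) ≤ 1) ↔
      ∃ u ∈ cnbr G l[i], domCount G u (l.take i) ≤ 1 := by
    rw [List.getElem_append_left hi, List.take_append_of_le_length hi.le]
  have hnew : (∃ u ∈ cnbr G ((l ++ [w])[l.length]'(by simp)),
      domCount G u ((l ++ [w]).take l.length) ≤ 1) ↔ ∃ u ∈ cnbr G w, domCount G u l ≤ 1 := by
    rw [List.getElem_append_right le_rfl, List.take_left]; simp
  simp only [IsDNS, List.nodup_append, List.nodup_singleton, List.mem_singleton, Fin.forall_iff,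
    List.get_eq_getElem, List.length_append, List.length_singleton, Nat.lt_succ_iff_lt_or_eq]
  constructor
  · rintro ⟨⟨hnd, -, hw⟩, hstep⟩
    exact ⟨⟨hnd, fun i hi => (hold i hi).1 (hstep i (Or.inl hi))⟩, fun h => hw w h w rfl rfl,
      hnew.1 (hstep _ (Or.inr rfl))⟩
  · rintro ⟨⟨hnd, hstep⟩, hw, hlast⟩
    refine ⟨⟨hnd, trivial, fun a ha b hb hab => hw (hb ▸ hab ▸ ha)⟩, fun i hi => ?_⟩
    rcases hi with hi | rfl
    exacts [(hold i hi).2 (hstep i hi), hnew.2 hlast]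

lemma IsDNS.exists_isDDS_prefix [Finite V] (hiso : ∀ u : V, ∃ w, G.Adj u w) {l : List V}
    (hl : IsDNS G l) : ∃ l', IsDDS G l' ∧ l <+: l' := by
  by_cases hdd : ∀ u, 2 ≤ domCount G u l
  · exact ⟨l, ⟨hl, hdd⟩, List.prefix_refl l⟩
  obtain ⟨u, hu⟩ := not_forall.1 hdd
  obtain ⟨w, hw, hwl⟩ : ∃ w ∈ cnbr G u, w ∉ l := by
    by_contra! h
    obtain ⟨x, hx⟩ := hiso u
    have : cnbr G u ⊆ {w | w ∈ l ∧ u ∈ cnbr G w} := fun w hw => ⟨h w hw, mem_cnbr_comm.1 hw⟩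
    exact hu ((two_le_ncard_cnbr hx).trans (Set.ncard_le_ncard this))
  have hl' : IsDNS G (l ++ [w]) :=
    isDNS_append_singleton.2 ⟨hl, hwl, u, mem_cnbr_comm.1 hw, Nat.le_of_lt_succ (not_le.1 hu)⟩
  obtain ⟨l', hl'', hpre⟩ := hl'.exists_isDDS_prefix hiso
  exact ⟨l', hl'', (List.prefix_append l [w]).trans hpre⟩
termination_by Nat.card V - l.length
decreasing_by
  have := Fintype.ofFinite V
  have := hl'.1.length_le_card
  simp only [List.length_append, List.length_singleton, Nat.card_eq_fintype_card] at this ⊢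
  omega

lemma mem_cnbr_induce {S : Set V} {a b : S} : b ∈ cnbr (G.induce S) a ↔ (b : V) ∈ cnbr G a := by
  simp [cnbr, mem_neighborSet, Subtype.ext_iff]

lemma domCount_induce {S : Set V} {u : S} {l : List S} :
    domCount (G.induce S) u l = domCount G u (l.map Subtype.val) := by
  have : {w | w ∈ l.map Subtype.val ∧ (u : V) ∈ cnbr G w} =
      Subtype.val '' {w | w ∈ l ∧ u ∈ cnbr (G.induce S) w} := by
    ext x
    simp only [Set.mem_ofPred_eq, List.mem_map, Set.mem_image, mem_cnbr_induce]
    constructor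
    · rintro ⟨⟨w, hwl, rfl⟩, hc⟩
      exact ⟨w, ⟨hwl, hc⟩, rfl⟩
    · rintro ⟨w, ⟨hwl, hc⟩, rfl⟩
      exact ⟨⟨w, hwl, rfl⟩, hc⟩
  rw [domCount, domCount, this, Set.ncard_image_of_injective _ Subtype.val_injective]

lemma IsDNS.map_val {S : Set V} {l : List S} (hl : IsDNS (G.induce S) l) :
    IsDNS G (l.map Subtype.val) := by
  refine ⟨hl.1.map Subtype.val_injective, fun i => ?_⟩
  obtain ⟨u, hu, hc⟩ := hl.2 ⟨i, by simpa using i.2⟩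
  refine ⟨u, by simpa [mem_cnbr_induce] using hu, ?_⟩
  rwa [← List.map_take, ← domCount_induce]

open Classical in
lemma IsDNS.exists_induce_ne_subset (v : V) {l : List V} (hl : IsDNS G l) :
    ∃ l' : List ({u : V | u ≠ v} : Set V), IsDNS (G.induce {u : V | u ≠ v}) l' ∧
      l'.map Subtype.val ⊆ l ∧
      l.length ≤ l'.length + (if v ∈ l then 1 else 0) + min 2 (domCount G v l) := by
  -- Dropped from `l` are `v` and the vertices whose chosen witness is `v`; each of the latter
  -- raises the domination count of `v`, which was at most one before it, hence the `min 2`.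
  induction l using List.reverseRecOn with
  | nil => exact ⟨[], isDNS_nil, List.nil_subset _, by simp⟩
  | append_singleton l w ih =>
    obtain ⟨hl, hwl, u, hu, hcount⟩ := isDNS_append_singleton.1 hl
    obtain ⟨l', hl', hsub, hlen⟩ := ih hl
    have hmono : domCount G v l ≤ domCount G v (l ++ [w]) :=
      domCount_mono (List.subset_append_left _ _)
    by_cases hwv : w = v
    · subst hwv
      refine ⟨l', hl', List.subset_append_of_subset_left _ hsub, ?_⟩
      simp only [hwl, if_false, List.mem_append, List.mem_singleton, or_true, if_true,
        List.length_append, List.length_singleton] at hlen ⊢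
      omega
    have hv : (v ∈ l ++ [w]) ↔ v ∈ l := by simp [Ne.symm hwv]
    by_cases huv : u = v
    · subst huv
      refine ⟨l', hl', List.subset_append_of_subset_left _ hsub, ?_⟩
      simp only [if_congr hv rfl rfl, domCount_append_singleton_of_mem hu hwl,
        List.length_append, List.length_singleton]
      omega
    refine ⟨l' ++ [⟨w, hwv⟩], isDNS_append_singleton.2 ⟨hl', ?_, ⟨u, huv⟩, ?_, ?_⟩, ?_, ?_⟩
    · exact fun h => hwl (hsub (List.mem_map_of_mem h))
    · exact mem_cnbr_induce.2 hu
    · exact domCount_induce.trans_le ((domCount_mono hsub).trans hcount)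
    · simpa using List.subset_append_of_subset_left _ hsub
    · simp only [if_congr hv rfl rfl, List.length_append, List.length_singleton]
      omega

lemma IsDNS.exists_induce_ne (v : V) {l : List V} (hl : IsDNS G l) :
    ∃ l' : List ({u : V | u ≠ v} : Set V), IsDNS (G.induce {u : V | u ≠ v}) l' ∧
      l.length ≤ l'.length + 3 := by
  classical
  obtain ⟨l', hl', -, hlen⟩ := hl.exists_induce_ne_subset v
  refine ⟨l', hl', hlen.trans ?_⟩
  have : (if v ∈ l then 1 else 0) ≤ 1 := by split_ifs <;> simp
  omega

lemma IsDDS.length_le_gddn [Finite V] {l : List V} (hl : IsDDS G l) : l.length ≤ gddn G := by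
  have := Fintype.ofFinite V
  refine le_csSup ⟨Fintype.card V, ?_⟩ ⟨l, hl, rfl⟩
  rintro _ ⟨l, hl, rfl⟩
  exact hl.1.1.length_le_card

lemma gddn_le {n : ℕ} (h : ∀ l, IsDDS G l → l.length ≤ n) : gddn G ≤ n :=
  csSup_le' fun _ ⟨l, hl, hn⟩ => hn ▸ h l hl

end

theorem stmt6_general [Fintype V] (G : SimpleGraph V) (v : V)
    (hiso : ∀ u : V, ∃ w, G.Adj u w)
    (hiso' : ∀ a : ({u : V | u ≠ v} : Set V), ∃ b,
      (G.induce {u : V | u ≠ v}).Adj a b) :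
    gddn (G.induce {u : V | u ≠ v}) ≤ gddn G ∧
    gddn G ≤ gddn (G.induce {u : V | u ≠ v}) + 3 := by
  constructor
  · refine gddn_le fun l hl => ?_
    obtain ⟨l', hl', hpre⟩ := hl.1.map_val.exists_isDDS_prefix hiso
    simpa using hpre.length_le.trans hl'.length_le_gddn
  · refine gddn_le fun l hl => ?_
    obtain ⟨l', hl', hlen⟩ := hl.1.exists_induce_ne v
    obtain ⟨l'', hl'', hpre⟩ := hl'.exists_isDDS_prefix hiso'
    have := hpre.length_le.trans hl''.length_le_gddn
    omega

/-- vertex deletion decreases the Grundy double domination number by at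
most 3, and never increases it. -/
theorem stmt6 [Fintype V] [DecidableEq V] (G : SimpleGraph V) (v : V)
    (hiso : ∀ u : V, ∃ w, G.Adj u w)
    (hiso' : ∀ a : ({u : V | u ≠ v} : Set V), ∃ b,
      (G.induce {u : V | u ≠ v}).Adj a b) :
    gddn (G.induce {u : V | u ≠ v}) ≤ gddn G ∧
    gddn G ≤ gddn (G.induce {u : V | u ≠ v}) + 3 :=
  stmt6_general G v hiso hiso'
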